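/- Let (P_n)_{n≥0} be a monic OPS with recurrence coefficients (B_n), (C_n), let c ∈ ℂ, and suppose there exist complex sequences (a_n)_{n≥0}, (b_n)_{n≥0}, (c_n)_{n≥0} with c_0 = 0 such that (X − c)·S_q P_n = (a_n·X + b_n)·P_n + c_n·P_{n−1} for all n ≥ 0 (the case a = 1 of the structure relation). Then for all n ≥ 0: a_n = α_n and b_n = −α_n·c + (α_n − α_{n−1})·(B_0 + B_1 + ⋯ + B_{n−1}), where the sum is empty for n = 0. -/

import Mathlib

noncomputable section

/-- Real power `q ^ r` (with `q > 0` in applications), coerced into `ℂ`. -/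
def rp (q : ℝ) (r : ℝ) : ℂ := ((q ^ r : ℝ) : ℂ)

/-- The lattice point `x(z) = (z + z⁻¹)/2`. -/
def xl (z : ℂ) : ℂ := (z + z⁻¹) / 2

/-- `x₊(z) = (q^{1/2} z + q^{-1/2} z⁻¹)/2`. -/
def xp (q : ℝ) (z : ℂ) : ℂ := (rp q (1/2) * z + rp q (-(1/2)) * z⁻¹) / 2

/-- `x₋(z) = (q^{-1/2} z + q^{1/2} z⁻¹)/2`. -/
def xm (q : ℝ) (z : ℂ) : ℂ := (rp q (-(1/2)) * z + rp q (1/2) * z⁻¹) / 2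

/-- `IsSq q f g` means `g = S_q f`, i.e. `g` satisfies the defining property of the
averaging operator applied to `f`. -/
def IsSq (q : ℝ) (f g : Polynomial ℂ) : Prop :=
  ∀ z : ℂ, z ≠ 0 → Polynomial.eval (xl z) g =
    (Polynomial.eval (xp q z) f + Polynomial.eval (xm q z) f) / 2

/-- `IsDq q f g` means `g = D_q f`, i.e. `g` satisfies the defining property of the
Askey-Wilson operator applied to `f`. -/
def IsDq (q : ℝ) (f g : Polynomial ℂ) : Prop :=
  ∀ z : ℂ, z ≠ 0 → Polynomial.eval (xl z) g * (xp q z - xm q z) =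
    Polynomial.eval (xp q z) f - Polynomial.eval (xm q z) f

/-- `α = (q^{1/2} + q^{-1/2})/2`. -/
def alphaC (q : ℝ) : ℂ := (rp q (1/2) + rp q (-(1/2))) / 2

/-- `α_n = (q^{n/2} + q^{-n/2})/2`. -/
def alphaN (q : ℝ) (n : ℕ) : ℂ := (rp q ((n : ℝ)/2) + rp q (-((n : ℝ)/2))) / 2

/-- `γ_n = (q^{n/2} - q^{-n/2})/(q^{1/2} - q^{-1/2})`. -/
def gammaN (q : ℝ) (n : ℕ) : ℂ :=
  (rp q ((n : ℝ)/2) - rp q (-((n : ℝ)/2))) / (rp q (1/2) - rp q (-(1/2)))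

/-- The monic Chebyshev polynomials of the first kind. -/
def chebM (n : ℕ) : Polynomial ℂ :=
  if n = 0 then 1 else (2 : ℂ) ^ (1 - (n : ℤ)) • Polynomial.Chebyshev.T ℂ (n : ℤ)

end

/-!
The averaging operator is diagonal in the Chebyshev basis: since `T_n (x(z)) = (zⁿ + z⁻ⁿ)/2` and
`x₊(z) = x(q^{1/2} z)`, `x₋(z) = x(q^{-1/2} z)`, one gets `S_q T_n = α_n T_n`. As `T_n` has degree
`n` and, by parity, no `X^{n-1}` term, `S_q` does not raise degrees and multiplies the coefficients
of `Xⁿ` and `X^{n-1}` of a polynomial of degree at most `n` by `α_n` and `α_{n-1}`. Comparing the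
coefficients of `X^{n+1}` and `Xⁿ` in the structure relation gives `a_n` and `b_n`; the
coefficient of `X^{n-1}` in `P_n` is `-(B_0 + ⋯ + B_{n-1})` by the three-term recurrence.
-/

open Polynomial

namespace Polynomial.Chebyshev

theorem T_coeff_eq_zero_of_odd {R : Type*} [CommRing R] (n : ℕ) :
    ∀ k, Odd (n + k) → (T R n).coeff k = 0 := by
  induction n using Nat.twoStepInduction with
  | zero =>
    intro k hk
    rw [Nat.cast_zero, T_zero, coeff_one, if_neg]
    rintro rfl
    exact absurd hk (by decide)
  | one =>
    intro k hk
    rw [Nat.cast_one, T_one, coeff_X, if_neg]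
    rintro rfl
    exact absurd hk (by decide)
  | more n ih1 ih2 =>
    have hT : T R ((n + 2 : ℕ) : ℤ) = X * (2 * T R ((n + 1 : ℕ) : ℤ)) - T R n := by
      push_cast; rw [T_add_two]; ring
    rintro (_ | k) hk
    · rw [hT, coeff_sub, coeff_X_mul_zero, ih1 0 (by grind)]
      simp
    · rw [hT, coeff_sub, coeff_X_mul, ← C_ofNat, coeff_C_mul, ih2 k (by grind),
        ih1 (k + 1) (by grind), mul_zero, sub_zero]

theorem T_eval_half_add_inv {K : Type*} [Field K] [Invertible (2 : K)] {z : K} (hz : z ≠ 0)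
    (n : ℕ) : (T K n).eval ((z + z⁻¹) / 2) = (z ^ n + z⁻¹ ^ n) / 2 := by
  rw [chebyshev_T_eq_dickson_one_one, eval_mul, eval_comp, eval_mul, eval_ofNat, eval_X,
    mul_div_cancel₀ _ two_ne_zero, dickson_one_one_eval_add_inv _ _ (mul_inv_cancel₀ hz), eval_C,
    invOf_eq_inv, inv_mul_eq_div]

end Polynomial.Chebyshev

lemma degree_sub_coeff_smul_lt {R : Type*} [Ring R] {f b : R[X]} {n : ℕ} (hb : b.Monic)
    (hbn : b.natDegree = n) (hf : f.degree ≤ n) : (f - f.coeff n • b).degree < n := by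
  rw [degree_lt_iff_coeff_zero]
  intro m hm
  rcases hm.eq_or_lt with rfl | hlt
  · rw [coeff_sub, coeff_smul, ← hbn, hb.coeff_natDegree, smul_eq_mul, mul_one, sub_self]
  · have hfm : f.coeff m = 0 := coeff_eq_zero_of_degree_lt (hf.trans_lt (by exact_mod_cast hlt))
    have hbm : b.coeff m = 0 := coeff_eq_zero_of_natDegree_lt (by omega)
    rw [coeff_sub, coeff_smul, hfm, hbm, smul_zero, sub_zero]

open Polynomial.Chebyshev (T T_ne_zero leadingCoeff_T natDegree_T T_coeff_eq_zero_of_odd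
  T_eval_half_add_inv)

lemma chebM_eq_C_mul_T (n : ℕ) : chebM n = C (T ℂ n).leadingCoeff⁻¹ * T ℂ n := by
  rcases eq_or_ne n 0 with rfl | hn
  · simp [chebM]
  · rw [chebM, if_neg hn, leadingCoeff_T, Int.natAbs_natCast, ← C_mul', ← zpow_natCast,
      ← zpow_neg, Nat.cast_sub (Nat.one_le_iff_ne_zero.mpr hn)]
    push_cast
    ring_nf

lemma chebM_monic (n : ℕ) : (chebM n).Monic := by
  rw [chebM_eq_C_mul_T]
  exact monic_C_mul_of_mul_leadingCoeff_eq_one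
    (inv_mul_cancel₀ (leadingCoeff_ne_zero.mpr (T_ne_zero ℂ _)))

lemma chebM_natDegree (n : ℕ) : (chebM n).natDegree = n := by
  rw [chebM_eq_C_mul_T, natDegree_C_mul (inv_ne_zero (leadingCoeff_ne_zero.mpr (T_ne_zero ℂ _))),
    natDegree_T, Int.natAbs_natCast]

lemma chebM_coeff_self (n : ℕ) : (chebM n).coeff n = 1 := by
  simpa [chebM_natDegree] using (chebM_monic n).coeff_natDegree

lemma chebM_coeff_eq_zero_of_odd (n k : ℕ) (h : Odd (n + k)) : (chebM n).coeff k = 0 := by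
  rw [chebM_eq_C_mul_T, coeff_C_mul, T_coeff_eq_zero_of_odd n k h, mul_zero]

lemma exists_xl_eq (x : ℂ) : ∃ z ≠ 0, xl z = x := by
  obtain ⟨w, hw⟩ := IsAlgClosed.exists_eq_mul_self (x ^ 2 - 1)
  have hprod : (x + w) * (x - w) = 1 := by linear_combination hw
  refine ⟨x + w, left_ne_zero_of_mul_eq_one hprod, ?_⟩
  rw [xl, inv_eq_of_mul_eq_one_right hprod]
  ring

section IsSq

variable {q : ℝ} {f g : ℂ[X]}

lemma rp_half_inv (hq0 : 0 < q) : (rp q (1/2))⁻¹ = rp q (-(1/2)) := by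
  rw [rp, rp, Real.rpow_neg hq0.le, Complex.ofReal_inv]

lemma rp_half_pow (hq0 : 0 < q) (n : ℕ) : rp q (1/2) ^ n = rp q ((n : ℝ) / 2) := by
  rw [rp, rp, ← Complex.ofReal_pow, ← Real.rpow_mul_natCast hq0.le, one_div_mul_eq_div]

lemma xp_eq (hq0 : 0 < q) (z : ℂ) : xp q z = xl (rp q (1/2) * z) := by
  rw [xp, xl, mul_inv, rp_half_inv hq0]

lemma xm_eq (hq0 : 0 < q) (z : ℂ) : xm q z = xl ((rp q (1/2))⁻¹ * z) := by
  rw [xm, xl, mul_inv, inv_inv, rp_half_inv hq0]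

lemma alphaN_eq (hq0 : 0 < q) (n : ℕ) :
    alphaN q n = (rp q (1/2) ^ n + (rp q (1/2))⁻¹ ^ n) / 2 := by
  rw [alphaN, inv_pow, rp_half_pow hq0, rp, rp, Real.rpow_neg hq0.le, Complex.ofReal_inv]

lemma alphaN_zero : alphaN q 0 = 1 := by
  norm_num [alphaN, rp]

lemma isSq_T (hq0 : 0 < q) (n : ℕ) : IsSq q (T ℂ n) (alphaN q n • T ℂ n) := by
  intro z hz
  have hu : rp q (1/2) ≠ 0 := by
    rw [rp, Complex.ofReal_ne_zero]; exact (Real.rpow_pos_of_pos hq0 _).ne'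
  rw [xp_eq hq0, xm_eq hq0, eval_smul, smul_eq_mul, alphaN_eq hq0, xl, xl, xl,
    T_eval_half_add_inv hz, T_eval_half_add_inv (mul_ne_zero hu hz),
    T_eval_half_add_inv (mul_ne_zero (inv_ne_zero hu) hz), mul_inv, mul_inv, inv_inv]
  ring

lemma IsSq.sub {f₁ g₁ f₂ g₂ : ℂ[X]} (h₁ : IsSq q f₁ g₁) (h₂ : IsSq q f₂ g₂) :
    IsSq q (f₁ - f₂) (g₁ - g₂) := by
  intro z hz
  simp only [eval_sub, h₁ z hz, h₂ z hz]
  ring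

lemma IsSq.const_smul (a : ℂ) (h : IsSq q f g) : IsSq q (a • f) (a • g) := by
  intro z hz
  simp only [eval_smul, h z hz, smul_eq_mul]
  ring

lemma isSq_chebM (hq0 : 0 < q) (n : ℕ) : IsSq q (chebM n) (alphaN q n • chebM n) := by
  have h := (isSq_T hq0 n).const_smul (T ℂ n).leadingCoeff⁻¹
  rwa [smul_comm, ← C_mul', ← chebM_eq_C_mul_T] at h

lemma IsSq.unique {g₁ g₂ : ℂ[X]} (h₁ : IsSq q f g₁) (h₂ : IsSq q f g₂) : g₁ = g₂ := by
  refine Polynomial.funext fun x => ?_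
  obtain ⟨z, hz, rfl⟩ := exists_xl_eq x
  rw [h₁ z hz, h₂ z hz]

lemma IsSq.sub_smul_chebM (hq0 : 0 < q) (h : IsSq q f g) (a : ℂ) (n : ℕ) :
    IsSq q (f - a • chebM n) (g - (a * alphaN q n) • chebM n) := by
  simpa only [smul_smul] using h.sub ((isSq_chebM hq0 n).const_smul a)

lemma IsSq.degree_lt (hq0 : 0 < q) (h : IsSq q f g) {n : ℕ} (hf : f.degree < n) :
    g.degree < n := by
  induction n generalizing f g with
  | zero =>
    obtain rfl : f = 0 := degree_eq_bot.mp (Nat.WithBot.lt_zero_iff.mp hf)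
    obtain rfl : g = 0 := h.unique fun z _ => by simp
    simp
  | succ n ih =>
    have hfn : f.degree ≤ n := Order.le_of_lt_succ hf
    have hg' := ih (h.sub_smul_chebM hq0 (f.coeff n) n)
      (degree_sub_coeff_smul_lt (chebM_monic n) (chebM_natDegree n) hfn)
    have hg : g = (g - (f.coeff n * alphaN q n) • chebM n) + (f.coeff n * alphaN q n) • chebM n :=
      (sub_add_cancel _ _).symm
    rw [hg]
    refine (degree_add_le _ _).trans_lt (max_lt (hg'.trans (by exact_mod_cast n.lt_add_one)) ?_)
    refine (degree_smul_le _ _).trans_lt ?_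
    rw [degree_eq_natDegree (chebM_monic n).ne_zero, chebM_natDegree]
    exact_mod_cast n.lt_add_one

lemma IsSq.degree_le (hq0 : 0 < q) (h : IsSq q f g) {n : ℕ} (hf : f.degree ≤ n) :
    g.degree ≤ n :=
  Order.le_of_lt_succ (h.degree_lt hq0 (Order.lt_succ_of_le hf))

lemma IsSq.coeff_of_degree_le (hq0 : 0 < q) (h : IsSq q f g) {n : ℕ} (hf : f.degree ≤ n) :
    g.coeff n = alphaN q n * f.coeff n := by
  have hg' := (h.sub_smul_chebM hq0 (f.coeff n) n).degree_lt hq0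
    (degree_sub_coeff_smul_lt (chebM_monic n) (chebM_natDegree n) hf)
  have h0 := coeff_eq_zero_of_degree_lt hg'
  rw [coeff_sub, coeff_smul, chebM_coeff_self, smul_eq_mul, mul_one, sub_eq_zero] at h0
  rw [h0, mul_comm]

lemma IsSq.coeff_pred_of_degree_le (hq0 : 0 < q) (h : IsSq q f g) {n : ℕ}
    (hf : f.degree ≤ (n + 1 : ℕ)) : g.coeff n = alphaN q n * f.coeff n := by
  have hf' := degree_sub_coeff_smul_lt (chebM_monic (n + 1)) (chebM_natDegree (n + 1)) hf
  have h' := (h.sub_smul_chebM hq0 (f.coeff (n + 1)) (n + 1)).coeff_of_degree_le hq0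
    (Order.le_of_lt_succ hf')
  have hcheb : (chebM (n + 1)).coeff n = 0 := chebM_coeff_eq_zero_of_odd _ _ (by grind)
  simpa only [coeff_sub, coeff_smul, hcheb, smul_zero, sub_zero] using h'

end IsSq

lemma coeff_pred_eq_neg_sum_of_recurrence {R : Type*} [CommRing R] {P : ℕ → R[X]} {B C : ℕ → R}
    (hmonic : ∀ n, (P n).Monic) (hdeg : ∀ n, (P n).natDegree = n)
    (hrec0 : X * P 0 = P 1 + Polynomial.C (B 0) * P 0)
    (hrec : ∀ n : ℕ, X * P (n + 1) =
      P (n + 2) + Polynomial.C (B (n + 1)) * P (n + 1) + Polynomial.C (C (n + 1)) * P n)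
    (n : ℕ) : (P (n + 1)).coeff n = -∑ j ∈ Finset.range (n + 1), B j := by
  induction n with
  | zero =>
    have h := congrArg (coeff · 0) hrec0
    simp only [eq_one_of_monic_natDegree_zero (hmonic 0) (hdeg 0), mul_one, coeff_X_zero,
      coeff_add, coeff_C_zero] at h
    rw [Finset.sum_range_one]
    linear_combination -h
  | succ n ih =>
    have h := congrArg (coeff · (n + 1)) (hrec n)
    have hlead : (P (n + 1)).coeff (n + 1) = 1 := by
      simpa [hdeg] using (hmonic (n + 1)).coeff_natDegree
    have hlow : (P n).coeff (n + 1) = 0 := coeff_eq_zero_of_natDegree_lt (by rw [hdeg]; omega)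
    simp only [coeff_X_mul, coeff_add, coeff_C_mul, ih, hlead, hlow] at h
    rw [Finset.sum_range_succ]
    linear_combination -h

section StructureRelation

variable {R : Type*} [CommRing R] {s p r : R[X]} {a b c e : R}

lemma coeff_succ_of_structure_relation
    (h : (X - Polynomial.C c) * s =
      (Polynomial.C a * X + Polynomial.C b) * p + Polynomial.C e * r)
    (k : ℕ) :
    s.coeff k - c * s.coeff (k + 1) =
      a * p.coeff k + b * p.coeff (k + 1) + e * r.coeff (k + 1) := by
  have h' := congrArg (coeff · (k + 1)) h
  simpa only [coeff_X_sub_C_mul, add_mul, coeff_add, mul_assoc, coeff_C_mul, coeff_X_mul] using h'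

lemma coeff_zero_of_structure_relation
    (h : (X - Polynomial.C c) * s =
      (Polynomial.C a * X + Polynomial.C b) * p + Polynomial.C e * r) :
    -c * s.coeff 0 = b * p.coeff 0 + e * r.coeff 0 := by
  have h' := congrArg (coeff · 0) h
  simpa only [mul_coeff_zero, coeff_add, coeff_sub, coeff_X_zero, coeff_C_zero, coeff_C_mul,
    zero_sub, mul_zero, zero_add] using h'

end StructureRelation

theorem stmt6_general (q : ℝ) (hq0 : 0 < q)
    (P : ℕ → Polynomial ℂ) (B C : ℕ → ℂ)
    (hmonic : ∀ n, (P n).Monic) (hdeg : ∀ n, (P n).natDegree = n)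
    (hrec0 : Polynomial.X * P 0 = P 1 + Polynomial.C (B 0) * P 0)
    (hrec : ∀ n : ℕ, Polynomial.X * P (n + 1) =
      P (n + 2) + Polynomial.C (B (n + 1)) * P (n + 1) + Polynomial.C (C (n + 1)) * P n)
    (c : ℂ) (sa sb sc : ℕ → ℂ) (hc0 : sc 0 = 0)
    (SP : ℕ → Polynomial ℂ) (hSP : ∀ n, IsSq q (P n) (SP n))
    (hstruct : ∀ n : ℕ, (Polynomial.X - Polynomial.C c) * SP n =
      (Polynomial.C (sa n) * Polynomial.X + Polynomial.C (sb n)) * P n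
        + Polynomial.C (sc n) * P (n - 1)) :
    ∀ n : ℕ, sa n = alphaN q n ∧
      sb n = -alphaN q n * c + (alphaN q n - alphaN q (n - 1)) * ∑ j ∈ Finset.range n, B j := by
  have hPdeg : ∀ m, (P m).degree ≤ m := fun m => degree_le_of_natDegree_le (hdeg m).le
  have hPlead : ∀ m, (P m).coeff m = 1 := fun m => by
    simpa [hdeg m] using (hmonic m).coeff_natDegree
  have hPvanish : ∀ m k, m < k → (P m).coeff k = 0 := fun m k hmk =>
    coeff_eq_zero_of_natDegree_lt (by rwa [hdeg])
  have hSPlead : ∀ m, (SP m).coeff m = alphaN q m := fun m => by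
    rw [(hSP m).coeff_of_degree_le hq0 (hPdeg m), hPlead, mul_one]
  intro n
  have hsa : sa n = alphaN q n := by
    have h := coeff_succ_of_structure_relation (hstruct n) n
    rw [hSPlead, coeff_eq_zero_of_degree_lt (((hSP n).degree_le hq0 (hPdeg n)).trans_lt
      (by exact_mod_cast n.lt_add_one)), hPlead, hPvanish n _ n.lt_add_one,
      hPvanish (n - 1) _ (by omega)] at h
    linear_combination -h
  refine ⟨hsa, ?_⟩
  cases n with
  | zero =>
    have h := coeff_zero_of_structure_relation (hstruct 0)
    rw [hSPlead, hPlead, hc0] at h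
    simp only [alphaN_zero] at h ⊢
    linear_combination -h
  | succ n =>
    have h := coeff_succ_of_structure_relation (hstruct (n + 1)) n
    rw [Nat.add_sub_cancel] at h ⊢
    rw [(hSP (n + 1)).coeff_pred_of_degree_le hq0 (hPdeg _), hSPlead, hPlead, hsa,
      hPvanish n _ n.lt_add_one, coeff_pred_eq_neg_sum_of_recurrence hmonic hdeg hrec0 hrec] at h
    linear_combination -h

theorem stmt6 (q : ℝ) (hq0 : 0 < q) (hq1 : q < 1)
    (P : ℕ → Polynomial ℂ) (B C : ℕ → ℂ)
    (hmonic : ∀ n, (P n).Monic) (hdeg : ∀ n, (P n).natDegree = n)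
    (hCne : ∀ n, 1 ≤ n → C n ≠ 0)
    (hrec0 : Polynomial.X * P 0 = P 1 + Polynomial.C (B 0) * P 0)
    (hrec : ∀ n : ℕ, Polynomial.X * P (n + 1) =
      P (n + 2) + Polynomial.C (B (n + 1)) * P (n + 1) + Polynomial.C (C (n + 1)) * P n)
    (c : ℂ) (sa sb sc : ℕ → ℂ) (hc0 : sc 0 = 0)
    (SP : ℕ → Polynomial ℂ) (hSP : ∀ n, IsSq q (P n) (SP n))
    (hstruct : ∀ n : ℕ, (Polynomial.X - Polynomial.C c) * SP n =
      (Polynomial.C (sa n) * Polynomial.X + Polynomial.C (sb n)) * P n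
        + Polynomial.C (sc n) * P (n - 1)) :
    ∀ n : ℕ, sa n = alphaN q n ∧
      sb n = -alphaN q n * c + (alphaN q n - alphaN q (n - 1)) * ∑ j ∈ Finset.range n, B j :=
  stmt6_general q hq0 P B C hmonic hdeg hrec0 hrec c sa sb sc hc0 SP hSP hstruct
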